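/- arXiv:2108.13312 — 8 statements merged into one kernel-verified Lean document; each statement's English description precedes it below -/
import Mathlib

section
/- Let A ∈ ℝ^{2N×2N} be symmetric and S_T defined as the 4N×4N block matrix [[−(T/2π)A, −J_N],[J_N, −(T/2π)A]]. Then det S_T = 0 if and only if (2π/T)·i is an eigenvalue of J_N·A. -/
open Matrix

/-- The standard symplectic matrix `J_N = [[0, -I_N],[I_N, 0]]`. -/
def symplJ (N : ℕ) : Matrix (Fin N ⊕ Fin N) (Fin N ⊕ Fin N) ℝ :=
  Matrix.fromBlocks 0 (-1) 1 0

/-- The matrix `S_T = [[-(T/2π)A, -J_N],[J_N, -(T/2π)A]]`. -/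
noncomputable def matS (N : ℕ) (A : Matrix (Fin N ⊕ Fin N) (Fin N ⊕ Fin N) ℝ) (T : ℝ) :
    Matrix ((Fin N ⊕ Fin N) ⊕ (Fin N ⊕ Fin N)) ((Fin N ⊕ Fin N) ⊕ (Fin N ⊕ Fin N)) ℝ :=
  Matrix.fromBlocks (-(T / (2 * Real.pi)) • A) (-(symplJ N)) (symplJ N)
    (-(T / (2 * Real.pi)) • A)

/-!
Over `ℂ`, conjugating `[[X, -Y], [Y, X]]` by the unipotent matrix `[[1, i], [0, 1]]` makes it
block lower triangular, so `det S_T = det (X + iJ) · det (X - iJ)` with `X = -(T/2π) A`. As `A` is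
symmetric and `J` skew, the two factors are transposes of each other. Finally, `J² = -1` gives
`J (cA - iJ) = -c (μ - JA)` for `c = -T/2π` and `μ = -i/c = 2πi/T`, and `J` is invertible.
-/

namespace Matrix

variable {n R K : Type*} [Fintype n] [DecidableEq n] [CommRing R] [Field K]

theorem det_map_ofReal_eq_zero_iff (M : Matrix n n ℝ) :
    (M.map Complex.ofReal).det = 0 ↔ M.det = 0 := by
  rw [← Complex.ofReal_eq_zero, ← Complex.ofRealHom_eq_coe, Complex.ofRealHom.map_det]
  rfl

theorem det_fromBlocks_neg_skew {i : R} (hi : i * i = -1) (X Y : Matrix n n R) :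
    (fromBlocks X (-Y) Y X).det = (X + i • Y).det * (X - i • Y).det := by
  have hconj : fromBlocks 1 (i • 1) 0 1 * fromBlocks X (-Y) Y X * fromBlocks 1 (-(i • 1)) 0 1 =
      fromBlocks (X + i • Y) 0 Y (X - i • Y) := by
    simp only [fromBlocks_multiply, Matrix.one_mul, Matrix.mul_one, Matrix.zero_mul,
      Matrix.mul_zero, Matrix.smul_mul, Matrix.mul_smul, Matrix.mul_neg, smul_add,
      smul_smul, hi, neg_smul, one_smul, add_zero, zero_add]
    congr 1 <;> abel
  simpa [det_fromBlocks_zero₂₁, det_fromBlocks_zero₁₂] using congrArg det hconj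

theorem det_add_eq_det_sub_of_transpose {A B : Matrix n n R} (hA : Aᵀ = A) (hB : Bᵀ = -B) :
    (A + B).det = (A - B).det := by
  rw [← det_transpose, transpose_add, hA, hB, sub_eq_add_neg]

theorem det_fromBlocks_neg_skew_eq_sq {i : R} (hi : i * i = -1) {X Y : Matrix n n R}
    (hX : Xᵀ = X) (hY : Yᵀ = -Y) :
    (fromBlocks X (-Y) Y X).det = (X - i • Y).det ^ 2 := by
  rw [det_fromBlocks_neg_skew hi, sq,
    det_add_eq_det_sub_of_transpose hX (by rw [transpose_smul, hY, smul_neg])]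

theorem det_ne_zero_of_mul_self_eq_neg_one {J : Matrix n n K} (hJ : J * J = -1) : J.det ≠ 0 := by
  have hdet : J.det * J.det = (-1) ^ Fintype.card n := by
    rw [← det_mul, hJ, det_neg, det_one, mul_one]
  exact left_ne_zero_of_mul (hdet ▸ pow_ne_zero _ (neg_ne_zero.mpr one_ne_zero))

theorem det_smul_sub_smul_eq_zero_iff_mem_spectrum {J : Matrix n n K} (hJ : J * J = -1)
    (A : Matrix n n K) {c : K} (hc : c ≠ 0) (i : K) :
    (c • A - i • J).det = 0 ↔ -(i / c) ∈ spectrum K (J * A) := by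
  have key : J * (c • A - i • J) = (-c) • (algebraMap K _ (-(i / c)) - J * A) := by
    rw [Matrix.mul_sub, Matrix.mul_smul, Matrix.mul_smul, hJ, Algebra.algebraMap_eq_smul_one,
      smul_sub, smul_smul, neg_mul_neg, mul_div_cancel₀ _ hc]
    simp only [smul_neg, neg_smul]
    abel
  have hdet := congrArg det key
  rw [det_mul, det_smul] at hdet
  rw [spectrum.mem_iff, isUnit_iff_isUnit_det, isUnit_iff_ne_zero, not_not,
    ← mul_right_inj' (det_ne_zero_of_mul_self_eq_neg_one hJ), hdet, mul_zero,
    mul_eq_zero, or_iff_right (pow_ne_zero _ (neg_ne_zero.mpr hc))]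

end Matrix

theorem symplJ_mul_self (N : ℕ) : symplJ N * symplJ N = -1 := by
  simp only [symplJ, fromBlocks_multiply]
  simp [← fromBlocks_one, fromBlocks_neg]

theorem symplJ_transpose (N : ℕ) : (symplJ N)ᵀ = -symplJ N := by
  simp [symplJ, fromBlocks_transpose, fromBlocks_neg]

theorem symplJ_map_ofReal_mul_self (N : ℕ) :
    (symplJ N).map Complex.ofReal * (symplJ N).map Complex.ofReal = -1 := by
  refine (Matrix.map_mul (f := Complex.ofRealHom)).symm.trans ?_
  rw [symplJ_mul_self, Matrix.map_neg _ (map_neg _), Matrix.map_one _ (map_zero _) (map_one _)]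

theorem symplJ_map_ofReal_transpose (N : ℕ) :
    ((symplJ N).map Complex.ofReal)ᵀ = -(symplJ N).map Complex.ofReal := by
  rw [← transpose_map, symplJ_transpose, Matrix.map_neg _ Complex.ofReal_neg]

theorem matS_map_ofReal (N : ℕ) (A : Matrix (Fin N ⊕ Fin N) (Fin N ⊕ Fin N) ℝ) (T : ℝ) :
    (matS N A T).map Complex.ofReal =
      fromBlocks (((-(T / (2 * Real.pi)) : ℝ) : ℂ) • A.map Complex.ofReal)
        (-(symplJ N).map Complex.ofReal) ((symplJ N).map Complex.ofReal)
        (((-(T / (2 * Real.pi)) : ℝ) : ℂ) • A.map Complex.ofReal) := by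
  rw [matS, fromBlocks_map, Matrix.map_neg _ Complex.ofReal_neg,
    Matrix.map_smul' _ _ _ Complex.ofReal_mul]

theorem det_matS_eq_zero_iff (N : ℕ) (A : Matrix (Fin N ⊕ Fin N) (Fin N ⊕ Fin N) ℝ)
    (hA : A.IsSymm) (T : ℝ) (hT : 0 < T) :
    (matS N A T).det = 0 ↔
      ((2 * Real.pi / T : ℝ) : ℂ) * Complex.I ∈
        spectrum ℂ ((symplJ N).map Complex.ofReal * A.map Complex.ofReal) := by
  set Ac := A.map Complex.ofReal
  set c : ℂ := ((-(T / (2 * Real.pi)) : ℝ) : ℂ)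
  have hc : c ≠ 0 := by
    simp only [c, Complex.ofReal_ne_zero, neg_ne_zero]
    exact div_ne_zero hT.ne' (by positivity)
  have hμ : -(Complex.I / c) = ((2 * Real.pi / T : ℝ) : ℂ) * Complex.I := by
    simp only [c]
    push_cast
    field_simp
  have hAc : (c • Ac)ᵀ = c • Ac := by rw [transpose_smul, ← transpose_map, hA.eq]
  rw [← det_map_ofReal_eq_zero_iff, matS_map_ofReal,
    det_fromBlocks_neg_skew_eq_sq Complex.I_mul_I hAc (symplJ_map_ofReal_transpose N),
    pow_eq_zero_iff two_ne_zero,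
    det_smul_sub_smul_eq_zero_iff_mem_spectrum (symplJ_map_ofReal_mul_self N) Ac hc, hμ]
end

section
/- Let A ∈ ℝ^{2N×2N} be symmetric, T > 0, and S_T = [[−(T/2π)A, −J_N],[J_N, −(T/2π)A]]. Then the characteristic polynomial of S_T satisfies det(S_T − λ·I_{4N}) = p_T(λ)² for all λ ∈ ℝ, where p_T(λ) := det(−(T/2π)A + i·J_N − λ·I_{2N}). -/
open Matrix

lemma det_blocks_complex {n : Type*} [Fintype n] [DecidableEq n]
    (X Y : Matrix n n ℂ) :
    (Matrix.fromBlocks X (-Y) Y X).det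
      = (X + Complex.I • Y).det * (X - Complex.I • Y).det := by
  have hII : ∀ Z : Matrix n n ℂ, Complex.I • Complex.I • Z = -Z := fun Z => by
    rw [smul_smul, Complex.I_mul_I, neg_one_smul]
  have key : Matrix.fromBlocks 1 (Complex.I • 1) 0 1 * Matrix.fromBlocks X (-Y) Y X *
      Matrix.fromBlocks 1 (-(Complex.I • (1 : Matrix n n ℂ))) 0 1 =
      Matrix.fromBlocks (X + Complex.I • Y) 0 Y (X - Complex.I • Y) := by
    rw [Matrix.fromBlocks_multiply, Matrix.fromBlocks_multiply]
    refine Matrix.fromBlocks_inj.mpr ⟨?_, ?_, ?_, ?_⟩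
    · simp [Matrix.smul_mul]
    · simp only [Matrix.smul_mul, Matrix.mul_smul, Matrix.one_mul, Matrix.mul_one,
        Matrix.zero_mul, Matrix.mul_zero, smul_zero, zero_add, add_zero, neg_smul,
        Matrix.mul_neg, Matrix.neg_mul, smul_add, smul_neg, hII]
      abel
    · simp
    · simp only [Matrix.smul_mul, Matrix.mul_smul, Matrix.one_mul, Matrix.mul_one,
        Matrix.zero_mul, Matrix.mul_zero, smul_zero, zero_add, add_zero, neg_smul,
        Matrix.mul_neg, Matrix.neg_mul, smul_add, smul_neg, hII]
      abel
  have hdet := congrArg Matrix.det key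
  rw [Matrix.det_mul, Matrix.det_mul, Matrix.det_fromBlocks_zero₂₁,
    Matrix.det_fromBlocks_zero₂₁, Matrix.det_fromBlocks_zero₁₂] at hdet
  simpa using hdet

theorem charpoly_matS (N : ℕ) (A : Matrix (Fin N ⊕ Fin N) (Fin N ⊕ Fin N) ℝ)
    (hA : A.IsSymm) (T : ℝ) (hT : 0 < T) (lam : ℝ) :
    (((matS N A T - lam • 1).det : ℝ) : ℂ)
      = ((-((T / (2 * Real.pi) : ℂ) • A.map Complex.ofReal)
          + Complex.I • (symplJ N).map Complex.ofReal
          - (lam : ℂ) • (1 : Matrix (Fin N ⊕ Fin N) (Fin N ⊕ Fin N) ℂ)).det) ^ 2 := by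
  set A' : Matrix (Fin N ⊕ Fin N) (Fin N ⊕ Fin N) ℂ := A.map Complex.ofReal with hA'
  set Y : Matrix (Fin N ⊕ Fin N) (Fin N ⊕ Fin N) ℂ := (symplJ N).map Complex.ofReal with hY
  set X : Matrix (Fin N ⊕ Fin N) (Fin N ⊕ Fin N) ℂ :=
    -((T / (2 * Real.pi) : ℂ) • A') - (lam : ℂ) • 1 with hX
  -- the real matrix as blocks
  have hblocks : matS N A T - lam • 1 =
      Matrix.fromBlocks (-(T / (2 * Real.pi)) • A - lam • 1) (-(symplJ N)) (symplJ N)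
        (-(T / (2 * Real.pi)) • A - lam • 1) := by
    rw [matS, ← Matrix.fromBlocks_one, Matrix.fromBlocks_smul, sub_eq_add_neg,
      Matrix.fromBlocks_neg, Matrix.fromBlocks_add]
    simp [sub_eq_add_neg]
  -- complexify the determinant
  have hmap : ((matS N A T - lam • 1).det : ℂ)
      = ((matS N A T - lam • 1).map Complex.ofRealHom).det := by
    have := RingHom.map_det Complex.ofRealHom (matS N A T - lam • 1)
    rw [RingHom.mapMatrix_apply] at this
    simpa using this
  have hXmap : (-(T / (2 * Real.pi)) • A - lam • (1 : Matrix (Fin N ⊕ Fin N) (Fin N ⊕ Fin N) ℝ)).map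
      Complex.ofRealHom = X := by
    ext i j
    by_cases h : i = j <;>
      simp [hX, hA', Matrix.one_apply, h] <;> push_cast <;> ring
  have hYmap : (symplJ N).map Complex.ofRealHom = Y := by
    ext i j; simp [hY]
  have hnYmap : (-(symplJ N)).map Complex.ofRealHom = -Y := by
    ext i j; simp [hY]
  have hmap2 : (matS N A T - lam • 1).map Complex.ofRealHom =
      Matrix.fromBlocks X (-Y) Y X := by
    rw [hblocks, Matrix.fromBlocks_map, hXmap, hYmap, hnYmap]
  rw [hmap, hmap2, det_blocks_complex]
  -- transpose symmetry: det (X - I•Y) = det (X + I•Y)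
  have hXsymm : Xᵀ = X := by
    rw [hX]
    simp only [Matrix.transpose_sub, Matrix.transpose_neg, Matrix.transpose_smul,
      Matrix.transpose_one]
    rw [hA', ← Matrix.transpose_map, hA.eq]
  have hYanti : Yᵀ = -Y := by
    rw [hY, ← Matrix.transpose_map]
    have hJ : (symplJ N)ᵀ = -(symplJ N) := by
      rw [symplJ, Matrix.fromBlocks_transpose, Matrix.fromBlocks_neg]
      simp
    rw [hJ]
    ext i j; simp
  have htr : (X + Complex.I • Y)ᵀ = X - Complex.I • Y := by
    rw [Matrix.transpose_add, Matrix.transpose_smul, hXsymm, hYanti, smul_neg]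
    abel
  have hdet2 : (X - Complex.I • Y).det = (X + Complex.I • Y).det := by
    rw [← htr, Matrix.det_transpose]
  rw [hdet2, ← sq]
  congr 1
  rw [hX]
  abel
end

section
/- Let A ∈ ℝ^{2N×2N} be symmetric and S_T = [[−(T/2π)A, −J_N],[J_N, −(T/2π)A]]. Then the negative Morse index of S_T (the total multiplicity of negative eigenvalues of the symmetric matrix S_T) is even. -/
open Matrix

section auxlemmas
open Polynomial

variable {n R : Type*} [Fintype n] [DecidableEq n] [CommRing R]

lemma my_charpoly_conj (U M V : Matrix n n R) (hUV : U * V = 1) :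
    (U * M * V).charpoly = M.charpoly := by
  have hmap : ∀ (X Y : Matrix n n R), X * Y = 1 →
      (X.map (C : R →+* R[X])) * (Y.map C) = 1 := by
    intro X Y h
    rw [← Matrix.map_mul, h]
    simp
  have hkey : charmatrix (U * M * V) =
      (U.map (C : R →+* R[X])) * charmatrix M * (V.map C) := by
    unfold charmatrix
    rw [mul_sub, sub_mul]
    congr 1
    · rw [← (Matrix.scalar_commute (X : R[X]) (Commute.all _) (U.map C)).eq, mul_assoc,
        hmap U V hUV, mul_one]
    · simp [RingHom.mapMatrix_apply, Matrix.map_mul]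
  rw [Matrix.charpoly, hkey, Matrix.det_mul, Matrix.det_mul, mul_right_comm,
    ← Matrix.det_mul, hmap U V hUV, Matrix.det_one, one_mul]
  rfl

lemma my_charpoly_diagonal (d : n → R) :
    (Matrix.diagonal d).charpoly = ∏ i, (X - C (d i)) := by
  have : charmatrix (Matrix.diagonal d) = Matrix.diagonal (fun i => X - C (d i)) := by
    ext i j
    by_cases h : i = j
    · subst h; simp
    · simp [h, Matrix.diagonal_apply_ne _ h]
  rw [Matrix.charpoly, this, Matrix.det_diagonal]

lemma my_charpoly_transpose (M : Matrix n n R) : M.transpose.charpoly = M.charpoly := by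
  have : charmatrix M.transpose = (charmatrix M).transpose := by
    ext i j
    by_cases h : i = j
    · subst h; simp
    · simp [h, Ne.symm h]
  rw [Matrix.charpoly, this, Matrix.det_transpose]
  rfl

lemma my_charpoly_eig (B : Matrix n n ℝ) (hB : B.IsHermitian) :
    B.charpoly = ∏ i, (X - C (hB.eigenvalues i)) := by
  have h := hB.spectral_theorem
  have hU : (hB.eigenvectorUnitary : Matrix n n ℝ) * star (hB.eigenvectorUnitary : Matrix n n ℝ)
      = 1 := (Matrix.mem_unitaryGroup_iff).mp hB.eigenvectorUnitary.2
  have : B.charpoly = (Matrix.diagonal (RCLike.ofReal ∘ hB.eigenvalues)).charpoly := by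
    conv_lhs => rw [h]
    exact my_charpoly_conj _ _ _ hU
  rw [this, my_charpoly_diagonal]
  simp

variable {m : Type*} [Fintype m] [DecidableEq m]

lemma my_charpoly_block_sq (P Q : Matrix m m ℂ) (hP : Pᵀ = P) (hQ : Qᵀ = -Q) :
    (Matrix.fromBlocks P (-Q) Q P).charpoly = (P + Complex.I • Q).charpoly ^ 2 := by
  set M : Matrix m m ℂ := P + Complex.I • Q with hM
  set M' : Matrix m m ℂ := P - Complex.I • Q with hM'
  set U : Matrix (m ⊕ m) (m ⊕ m) ℂ :=
    Matrix.fromBlocks 1 1 (Complex.I • 1) (-(Complex.I • 1)) with hUdef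
  set V : Matrix (m ⊕ m) (m ⊕ m) ℂ :=
    (1/2 : ℂ) • Matrix.fromBlocks 1 (-(Complex.I • 1)) 1 (Complex.I • 1) with hVdef
  have hUV : U * V = 1 := by
    rw [hUdef, hVdef, Matrix.mul_smul, Matrix.fromBlocks_multiply]
    ext (i|i) (j|j) <;>
      simp [Matrix.fromBlocks, smul_smul, Complex.I_mul_I, Matrix.one_apply, two_smul] <;>
      ring_nf <;>
      simp [Matrix.one_apply, apply_ite]
  have hSplit : Matrix.fromBlocks P (-Q) Q P = U * (Matrix.fromBlocks M' 0 0 M) * V := by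
    rw [hUdef, hVdef, Matrix.mul_smul, Matrix.fromBlocks_multiply,
      Matrix.fromBlocks_multiply]
    ext (i|i) (j|j) <;>
      simp [Matrix.fromBlocks, hM, hM', smul_smul, Complex.I_mul_I, smul_sub, smul_add,
        Matrix.mul_apply] <;>
      ring_nf
  have hC : (U * (Matrix.fromBlocks M' 0 0 M) * V).charpoly
      = (Matrix.fromBlocks M' 0 0 M).charpoly := my_charpoly_conj _ _ _ hUV
  have hM'M : M'.charpoly = M.charpoly := by
    have : Mᵀ = M' := by
      rw [hM, hM', Matrix.transpose_add, Matrix.transpose_smul, hP, hQ]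
      module
    rw [← this, my_charpoly_transpose]
  rw [hSplit, hC, Matrix.charpoly_fromBlocks_zero₂₁, hM'M, sq]


end auxlemmas

open Polynomial in
/-- The negative Morse index (total multiplicity of negative eigenvalues) of `S_T` is even. -/
theorem morse_index_matS_even (N : ℕ) (A : Matrix (Fin N ⊕ Fin N) (Fin N ⊕ Fin N) ℝ)
    (hA : A.IsSymm) (T : ℝ) (hT : 0 < T) (hS : (matS N A T).IsHermitian) :
    Even (Finset.univ.filter (fun i => hS.eigenvalues i < 0)).card := by
  classical
  set f := hS.eigenvalues with hf
  set S := matS N A T with hSdef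
  set p : Polynomial ℝ := S.charpoly with hpdef
  -- p = ∏ (X - C (f i))
  have hp : p = ∏ i, (X - C (f i)) := my_charpoly_eig S hS
  -- complexification
  set ι : ℝ →+* ℂ := algebraMap ℝ ℂ with hι
  set P : Matrix (Fin N ⊕ Fin N) (Fin N ⊕ Fin N) ℂ :=
    (-(T / (2 * Real.pi)) • A).map ι with hPdef
  set Q : Matrix (Fin N ⊕ Fin N) (Fin N ⊕ Fin N) ℂ := (symplJ N).map ι with hQdef
  have hmapS : S.map ι = Matrix.fromBlocks P (-Q) Q P := by
    rw [hSdef, matS, Matrix.fromBlocks_map]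
    ext (i|i) (j|j) <;> simp [hPdef, hQdef, Matrix.fromBlocks]
  have hP : Pᵀ = P := by
    rw [hPdef, ← Matrix.transpose_map, Matrix.transpose_smul, hA.eq]
  have hJt : (symplJ N)ᵀ = -(symplJ N) := by
    rw [symplJ, Matrix.fromBlocks_transpose]
    ext (i|i) (j|j) <;> simp [Matrix.fromBlocks]
  have hQ : Qᵀ = -Q := by
    rw [hQdef, ← Matrix.transpose_map, hJt]
    ext i j
    simp
  set q : Polynomial ℂ := (P + Complex.I • Q).charpoly with hqdef
  have hq0 : q ≠ 0 := (P + Complex.I • Q).charpoly_monic.ne_zero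
  have hmapsq : p.map ι = q ^ 2 := by
    rw [hpdef, ← Matrix.charpoly_map S ι, hmapS, my_charpoly_block_sq P Q hP hQ]
  -- each fiber is even
  have hfiber : ∀ lam : ℝ, Even (Finset.univ.filter (fun i => f i = lam)).card := by
    intro lam
    have h1 : (Finset.univ.filter (fun i => f i = lam)).card = p.roots.count lam := by
      have hroots : p.roots = Finset.univ.val.map f := by
        rw [hp]
        rw [show (∏ i, (X - C (f i))) = ((Finset.univ.val.map f).map (fun a => X - C a)).prod by
          rw [Multiset.map_map]; rfl]
        exact roots_multiset_prod_X_sub_C _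
      rw [hroots, Multiset.count_map]
      simp only [Finset.card, Finset.filter_val]
      congr 1
      exact Multiset.filter_congr (fun x _ => by exact eq_comm)
    have h2 : p.roots.count lam = rootMultiplicity lam p := count_roots p
    have h3 : rootMultiplicity lam p = rootMultiplicity (ι lam) (p.map ι) :=
      eq_rootMultiplicity_map (ι : ℝ →+* ℂ).injective lam
    have h4 : rootMultiplicity (ι lam) (p.map ι)
        = rootMultiplicity (ι lam) q + rootMultiplicity (ι lam) q := by
      rw [hmapsq, sq, rootMultiplicity_mul (mul_ne_zero hq0 hq0)]
    rw [h1, h2, h3, h4]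
    exact Even.add_self _
  -- sum over fibers
  have hmain := Finset.card_eq_sum_card_fiberwise
    (f := f) (s := Finset.univ.filter (fun i => f i < 0))
    (t := (Finset.univ.filter (fun i => f i < 0)).image f)
    (fun x hx => Finset.mem_image_of_mem f hx)
  rw [hmain, even_iff_two_dvd]
  refine Finset.dvd_sum fun lam hlam => ?_
  obtain ⟨i0, hi0, rfl⟩ := Finset.mem_image.mp hlam
  have hneg : f i0 < 0 := (Finset.mem_filter.mp hi0).2
  rw [← even_iff_two_dvd]
  have : (Finset.univ.filter (fun i => f i < 0)).filter (fun i => f i = f i0)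
      = Finset.univ.filter (fun i => f i = f i0) := by
    ext j
    simp only [Finset.mem_filter, Finset.mem_univ, true_and]
    exact ⟨fun h => h.2, fun h => ⟨h ▸ hneg, h⟩⟩
  rw [this]
  exact hfiber (f i0)
end

section
/- Let p(λ) = d_k λ^k + ... + d_1 λ + d_0 be a real polynomial all of whose complex roots are real. Then the number of positive roots of p, counted with multiplicity, equals the number of sign changes in the sequence of coefficients d_k, d_{k−1}, ..., d_1, d_0 after removing zero entries. -/
open Polynomial

/-- Number of sign changes in a list of real numbers (assumed to have no zero entries
when applied, counting consecutive pairs of opposite sign). -/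
noncomputable def signChanges : List ℝ → ℕ
  | [] => 0
  | [_] => 0
  | a :: b :: l => (if a * b < 0 then 1 else 0) + signChanges (b :: l)

/-- The ordered list of coefficients `d_k, d_{k-1}, …, d_1, d_0` of a polynomial. -/
noncomputable def coeffList (p : Polynomial ℝ) : List ℝ :=
  (List.range (p.natDegree + 1)).map (fun i => p.coeff (p.natDegree - i))

/-!
Write `V` for the number of sign changes. Descartes' rule of signs bounds the positive roots of
`p` by `V p`, and its negative roots, which are the positive roots of `p(-X)`, by `V (p(-X))`.
On the other hand `V p + V (p(-X)) ≤ deg p - ord₀ p`, the number of nonzero roots: consecutive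
nonzero coefficients of degrees `i < j` contribute at most `j - i` sign changes to the two
polynomials together, because for `j = i + 1` the substitution `X ↦ -X` reverses the relative
sign of the two coefficients. When `p` splits, it has exactly `deg p - ord₀ p` nonzero roots,
so both Descartes bounds are equalities.
-/

namespace Polynomial

theorem natTrailingDegree_le_natTrailingDegree_eraseLead {R : Type*} [Semiring R] {P : R[X]}
    (h : P.eraseLead ≠ 0) : P.natTrailingDegree ≤ P.eraseLead.natTrailingDegree :=
  le_natTrailingDegree h fun m hm => by
    simp [eraseLead_coeff, coeff_eq_zero_of_lt_natTrailingDegree hm]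

section Ring

variable {R : Type*} [Ring R]

theorem coeff_comp_neg_X (P : R[X]) (n : ℕ) :
    (P.comp (-X)).coeff n = (-1) ^ n * P.coeff n := by
  rw [← neg_one_mul (X : R[X]), ← C_1, ← C_neg, comp_C_mul_X_coeff,
    ((Commute.neg_one_left _).pow_left _).eq]

theorem natDegree_comp_neg_X (P : R[X]) : (P.comp (-X)).natDegree = P.natDegree :=
  natDegree_eq_of_degree_eq degree_comp_neg_X

theorem eraseLead_comp_neg_X (P : R[X]) : (P.comp (-X)).eraseLead = P.eraseLead.comp (-X) := by
  ext n
  simp only [eraseLead_coeff, coeff_comp_neg_X, natDegree_comp_neg_X]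
  split_ifs <;> simp

variable [LinearOrder R] [IsStrictOrderedRing R]

theorem sign_leadingCoeff_comp_neg_X (P : R[X]) :
    SignType.sign (P.comp (-X)).leadingCoeff =
      (-1) ^ P.natDegree * SignType.sign P.leadingCoeff := by
  simp [sign_mul, sign_pow]

theorem signVariations_add_signVariations_comp_neg_X_le (P : R[X]) :
    signVariations P + signVariations (P.comp (-X)) ≤ P.natDegree - P.natTrailingDegree := by
  by_cases hP : P = 0
  · simp [hP]
  have hQ : P.comp (-X) ≠ 0 := comp_neg_X_eq_zero_iff.not.mpr hP
  rw [signVariations_eq_eraseLead_add_ite hP, signVariations_eq_eraseLead_add_ite hQ,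
    eraseLead_comp_neg_X]
  by_cases hP' : P.eraseLead = 0
  · simp [hP', leadingCoeff_ne_zero.mpr hP]
  have hdeg : P.eraseLead.natDegree < P.natDegree :=
    (eraseLead_natDegree_le P).trans_lt
      (Nat.sub_lt (natDegree_pos_of_eraseLead_ne_zero hP') one_pos)
  have ih := signVariations_add_signVariations_comp_neg_X_le P.eraseLead
  have htrail := natTrailingDegree_le_natTrailingDegree_eraseLead hP'
  have htrail' := natTrailingDegree_le_natDegree (p := P.eraseLead)
  have hsign : SignType.sign P.leadingCoeff ≠ 0 := by simpa using hP
  rw [sign_leadingCoeff_comp_neg_X, sign_leadingCoeff_comp_neg_X]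
  by_cases hgap : P.eraseLead.natDegree + 1 = P.natDegree
  · rw [← hgap, pow_succ]
    have hu : (-1 : SignType) ^ P.eraseLead.natDegree ≠ 0 := pow_ne_zero _ (by decide)
    have hnot_both :
        ∀ s s' u : SignType, s ≠ 0 → u ≠ 0 → s = -s' → u * -1 * s ≠ -(u * s') := by
      decide
    split_ifs with h h' <;> first | omega | exact absurd h' (hnot_both _ _ _ hsign hu h)
  · split_ifs <;> omega
termination_by P.natDegree

end Ring

end Polynomial

theorem Multiset.card_eq_countP_gt_add_countP_lt_add_count {α : Type*} [LinearOrder α] (a : α)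
    (s : Multiset α) : Multiset.card s = s.countP (a < ·) + s.countP (· < a) + s.count a := by
  induction s using Multiset.induction_on with
  | empty => simp
  | cons b s ih =>
    rcases lt_trichotomy a b with h | rfl | h
    · simp [h, h.not_gt, Multiset.count_cons_of_ne h.ne, ih]
      omega
    · simp [ih]
      omega
    · simp [h, h.not_gt, Multiset.count_cons_of_ne h.ne', ih]
      omega

theorem mul_neg_iff_sign_ne {α : Type*} [Ring α] [LinearOrder α] [IsStrictOrderedRing α]
    {a b : α} (ha : a ≠ 0) (hb : b ≠ 0) :
    a * b < 0 ↔ SignType.sign a ≠ SignType.sign b := by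
  rcases ha.lt_or_gt with ha | ha <;> rcases hb.lt_or_gt with hb | hb <;>
    simp [ha, hb, mul_neg_iff, sign_neg, sign_pos, ha.not_gt, hb.not_gt]

theorem signChanges_eq_length_destutter_sub_one :
    ∀ l : List ℝ, (∀ x ∈ l, x ≠ 0) →
      signChanges l = ((l.map SignType.sign).destutter (· ≠ ·)).length - 1
  | [], _ => rfl
  | [_], _ => rfl
  | a :: b :: l, hl => by
    have ih := signChanges_eq_length_destutter_sub_one (b :: l) (fun x hx => hl x (by simp [hx]))
    simp only [List.map_cons] at ih ⊢
    have hab := mul_neg_iff_sign_ne (hl a (by simp)) (hl b (by simp))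
    rw [signChanges, ih, List.destutter_cons_cons, List.destutter_cons']
    by_cases h : SignType.sign a = SignType.sign b
    · simp [hab, h]
    · have := List.destutter'_ne_nil (R := (· ≠ ·)) (a := SignType.sign b)
        (l := l.map SignType.sign)
      rw [← List.length_pos_iff_ne_nil] at this
      simp only [hab, h, ne_eq, not_false_eq_true, if_true, List.length_cons] at this ⊢
      omega

theorem signVariations_eq_signChanges (p : ℝ[X]) :
    signVariations p = signChanges (p.coeffList.filter (· ≠ 0)) := by
  rw [signChanges_eq_length_destutter_sub_one _ (by simp), signVariations, List.filter_map]
  simp [Function.comp_def]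

theorem filter_ne_zero_coeffList_eq (p : ℝ[X]) :
    (_root_.coeffList p).filter (· ≠ 0) = p.coeffList.filter (· ≠ 0) := by
  rcases eq_or_ne p 0 with rfl | hp
  · simp [_root_.coeffList]
  congr 1
  refine List.ext_getElem (by simp [_root_.coeffList, hp]) fun i _ _ => ?_
  simp [_root_.coeffList, Polynomial.coeffList, withBotSucc_degree_eq_natDegree_add_one hp]

theorem deGua_general (p : Polynomial ℝ)
    (hsplit : Polynomial.Splits (p.map (RingHom.id ℝ))) :
    Multiset.card (p.roots.filter (fun x => 0 < x))
      = signChanges ((_root_.coeffList p).filter (fun d => d ≠ 0)) := by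
  have hp : p.Splits := by simpa using hsplit
  rw [filter_ne_zero_coeffList_eq, ← signVariations_eq_signChanges,
    ← Multiset.countP_eq_card_filter]
  have hpos := roots_countP_pos_le_signVariations p
  have hneg : p.roots.countP (· < 0) ≤ signVariations (p.comp (-X)) := by
    simpa only [roots_comp_neg_X, Multiset.countP_map, ← Multiset.countP_eq_card_filter, neg_pos]
      using roots_countP_pos_le_signVariations (p.comp (-X))
  have hzero : p.roots.count 0 = p.natTrailingDegree := by
    rw [count_roots, rootMultiplicity_eq_natTrailingDegree']
  have hcard := Multiset.card_eq_countP_gt_add_countP_lt_add_count 0 p.roots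
  have hdeg := hp.natDegree_eq_card_roots
  have hsum := signVariations_add_signVariations_comp_neg_X_le p
  omega

/-- De Gua's corollary of Descartes' rule of signs: for a nonzero real polynomial all of
whose complex roots are real (i.e. which splits over ℝ), the number of positive roots
counted with multiplicity equals the number of sign changes in the coefficient sequence
after removing zero entries. -/
theorem deGua (p : Polynomial ℝ) (hp : p ≠ 0)
    (hsplit : Polynomial.Splits (p.map (RingHom.id ℝ))) :
    Multiset.card (p.roots.filter (fun x => 0 < x))
      = signChanges ((_root_.coeffList p).filter (fun d => d ≠ 0)) :=
  deGua_general p hsplit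
end

section
/- Let V: Ω → ℝ be C² on an open Ω ⊆ ℝ^N (N = 2 or 3), α_N the skew-symmetric matrix (α_2 = [[0,−1],[1,0]], α_3 its embedding in ℝ^{3×3} with zero last row and column), q_0 a critical point of V, W(q) := V(q) − (1/2)⟨q, α_N² q⟩, and A := [[I_N, α_N],[−α_N, W''(q_0)]] the Hessian of the Hamiltonian H(p,q) = |p|²/2 + ⟨p, α_N q⟩ + W(q) at u_0 = (−α_N q_0, q_0). Then for every λ ∈ ℂ, det(J_N·A − λ·I_{2N}) = det(V''(q_0) + λ²·I_N − 2λ·α_N). -/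
open Matrix

/-- Lemma 6.3: for `A = [[I, α],[-α, W'']]` the Hessian of the Hamiltonian
`H(p,q)=|p|²/2+⟨p,αq⟩+W(q)` at the equilibrium, where `W'' = V'' - α²` and `α` is
skew-symmetric (covering `α_2` and `α_3`), one has
`det(J·A - λ·I) = det(V'' + λ²·I - 2λ·α)` for every `λ ∈ ℂ`. -/
theorem det_JA_sub_lam (N : ℕ) (α Vpp : Matrix (Fin N) (Fin N) ℝ)
    (hα : α.transpose = -α) (hV : Vpp.IsSymm) (lam : ℂ) :
    (((symplJ N).map Complex.ofReal)
        * ((Matrix.fromBlocks 1 α (-α) (Vpp - α * α)).map Complex.ofReal)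
        - lam • (1 : Matrix (Fin N ⊕ Fin N) (Fin N ⊕ Fin N) ℂ)).det
      = (Vpp.map Complex.ofReal + (lam ^ 2) • (1 : Matrix (Fin N) (Fin N) ℂ)
          - (2 * lam) • α.map Complex.ofReal).det := by
  set a : Matrix (Fin N) (Fin N) ℂ := α.map Complex.ofReal with ha
  set v : Matrix (Fin N) (Fin N) ℂ := Vpp.map Complex.ofReal with hv
  set J : Matrix (Fin N ⊕ Fin N) (Fin N ⊕ Fin N) ℂ := fromBlocks 0 (-1) 1 0 with hJ
  have hmapJ : (symplJ N).map Complex.ofReal = J := by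
    rw [hJ, symplJ]
    ext (i|i) (j|j) <;> simp [fromBlocks, Matrix.map_apply, Matrix.one_apply, apply_ite]
  have hmapA : (Matrix.fromBlocks 1 α (-α) (Vpp - α * α)).map Complex.ofReal
      = fromBlocks 1 a (-a) (v - a * a) := by
    ext (i|i) (j|j) <;>
      simp [fromBlocks, a, v, Matrix.map_apply, Matrix.one_apply, apply_ite, Matrix.mul_apply]
  have hdetJ : J.det = 1 := by
    have h : J = fromBlocks 1 (-1) 0 1 * fromBlocks 1 0 1 1 * fromBlocks 1 (-1) 0 1 := by
      simp [hJ, Matrix.fromBlocks_multiply]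
    rw [h, det_mul, det_mul, det_fromBlocks_zero₂₁, det_fromBlocks_zero₁₂]
    simp
  set A : Matrix (Fin N ⊕ Fin N) (Fin N ⊕ Fin N) ℂ := fromBlocks 1 a (-a) (v - a * a) with hA
  have key : J * A - lam • 1 = J * (A + lam • J) := by
    have hJJ : J * J = -1 := by
      simp [hJ, Matrix.fromBlocks_multiply, ← fromBlocks_one, fromBlocks_neg]
    rw [mul_add, Matrix.mul_smul, hJJ]
    simp [sub_eq_add_neg]
  rw [hmapJ, hmapA, key, det_mul, hdetJ, one_mul]
  have hAJ : A + lam • J = fromBlocks 1 (a + lam • (-1)) (-a + lam • 1) (v - a * a) := by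
    rw [hA, hJ]
    ext (i|i) (j|j) <;> simp [fromBlocks]
  rw [hAJ, det_fromBlocks_one₁₁]
  congr 1
  have expand : (-a + lam • 1) * (a + lam • (-1 : Matrix (Fin N) (Fin N) ℂ))
      = -(a*a) + lam • a + lam • a - (lam^2) • 1 := by
    rw [add_mul, mul_add, mul_add, Matrix.smul_mul, Matrix.smul_mul, Matrix.mul_smul,
      Matrix.mul_smul, smul_smul]
    simp only [Matrix.neg_mul, Matrix.mul_neg, Matrix.mul_one, Matrix.one_mul, neg_neg,
      smul_neg, ← sq, one_pow]
    abel
  rw [expand, two_mul, add_smul]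
  abel
end

section
/- Let M ∈ ℝ^{3×3} be symmetric of block form [[M̃, 0],[0, β₃]] with M̃ ∈ ℝ^{2×2} symmetric with eigenvalues β₁, β₂, and let α_3 be the 3×3 matrix with α_2 = [[0,−1],[1,0]] in the upper-left block and zeros elsewhere. Then for all λ ∈ ℂ, det(M + λ²·I_3 − 2λ·α_3) = (λ² + β₃)·(λ⁴ + (β₁+β₂+4)λ² + β₁β₂). -/
open Matrix

/-- The 3×3 matrix with `α₂ = [[0,-1],[1,0]]` in the upper-left block and zeros elsewhere. -/
def alpha3 : Matrix (Fin 3) (Fin 3) ℝ := !![0, -1, 0; 1, 0, 0; 0, 0, 0]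

/-- For a symmetric `M ∈ ℝ^{3×3}` of block form `[[M̃,0],[0,β₃]]` with `M̃` symmetric of
trace `β₁+β₂` and determinant `β₁β₂`, one has
`det(M + λ²I₃ - 2λα₃) = (λ²+β₃)(λ⁴+(β₁+β₂+4)λ²+β₁β₂)` for all `λ ∈ ℂ`. -/
theorem det_spatial_charpoly (M : Matrix (Fin 3) (Fin 3) ℝ) (hM : M.IsSymm)
    (β₁ β₂ β₃ : ℝ)
    (h02 : M 0 2 = 0) (h12 : M 1 2 = 0) (h20 : M 2 0 = 0) (h21 : M 2 1 = 0)
    (h22 : M 2 2 = β₃)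
    (htr : M 0 0 + M 1 1 = β₁ + β₂)
    (hdet : M 0 0 * M 1 1 - M 0 1 * M 1 0 = β₁ * β₂) (lam : ℂ) :
    (M.map Complex.ofReal + (lam ^ 2) • (1 : Matrix (Fin 3) (Fin 3) ℂ)
        - (2 * lam) • alpha3.map Complex.ofReal).det
      = (lam ^ 2 + (β₃ : ℂ))
          * (lam ^ 4 + ((β₁ : ℂ) + (β₂ : ℂ) + 4) * lam ^ 2 + (β₁ : ℂ) * (β₂ : ℂ)) := by
  have hsym : M 1 0 = M 0 1 := by
    have := congrFun (congrFun hM 0) 1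
    simpa [Matrix.transpose_apply] using this
  rw [Matrix.det_fin_three]
  simp [alpha3, Matrix.sub_apply, Matrix.add_apply, Matrix.map_apply, Matrix.smul_apply,
    Matrix.one_apply, Matrix.vecHead, Matrix.vecTail,
    h02, h12, h20, h21, h22, hsym]
  have h1 : ((M 0 0 : ℂ) + (M 1 1 : ℂ)) = (β₁ : ℂ) + β₂ := by
    exact_mod_cast congrArg Complex.ofReal htr
  have h2 : ((M 0 0 : ℂ) * (M 1 1 : ℂ) - (M 0 1 : ℂ) * (M 0 1 : ℂ)) = (β₁ : ℂ) * β₂ := by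
    rw [hsym] at hdet
    exact_mod_cast congrArg Complex.ofReal hdet
  linear_combination (lam^2 + (β₃ : ℂ)) * lam^2 * h1 + (lam^2 + (β₃:ℂ)) * h2
end

section
/- Let q(λ) := λ² + (β₁+β₂+4)λ + β₁β₂ with (β₁,β₂) ∈ ℝ². If β₁ < 0, β₂ < 0 and β₁+β₂ < max(−4, −2−(β₁−β₂)²/8), then q has no nonpositive real root; equivalently, the quartic λ⁴ + (β₁+β₂+4)λ² + β₁β₂ has no purely imaginary root. -/
/-- If `(β₁,β₂) ∈ R₀` then `q(λ)=λ²+(β₁+β₂+4)λ+β₁β₂` has no nonpositive real root;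
equivalently, the quartic `λ⁴+(β₁+β₂+4)λ²+β₁β₂` has no purely imaginary root. -/
theorem no_imaginary_roots_R0 (β₁ β₂ : ℝ) (h₁ : β₁ < 0) (h₂ : β₂ < 0)
    (h : β₁ + β₂ < max (-4) (-2 - (β₁ - β₂) ^ 2 / 8)) :
    (∀ x : ℝ, x ≤ 0 → x ^ 2 + (β₁ + β₂ + 4) * x + β₁ * β₂ ≠ 0)
      ∧ (∀ lam : ℂ, lam.re = 0 →
          lam ^ 4 + ((β₁ : ℂ) + (β₂ : ℂ) + 4) * lam ^ 2 + (β₁ : ℂ) * (β₂ : ℂ) ≠ 0) := by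
  have hpos : ∀ x : ℝ, x ≤ 0 → 0 < x ^ 2 + (β₁ + β₂ + 4) * x + β₁ * β₂ := by
    intro x hx
    rcases le_or_gt (-4) (-2 - (β₁ - β₂) ^ 2 / 8) with hc | hc
    · have hs : β₁ + β₂ < -2 - (β₁ - β₂) ^ 2 / 8 := h.trans_le (max_le hc le_rfl)
      nlinarith [sq_nonneg (x + (β₁ + β₂ + 4) / 2), sq_nonneg (β₁ - β₂)]
    · have hs : β₁ + β₂ < -4 := by
        have := h; rw [max_eq_left hc.le] at this; exact this
      nlinarith [sq_nonneg x, mul_pos_of_neg_of_neg h₁ h₂]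
  have part1 : ∀ x : ℝ, x ≤ 0 → x ^ 2 + (β₁ + β₂ + 4) * x + β₁ * β₂ ≠ 0 :=
    fun x hx => (hpos x hx).ne'
  refine ⟨part1, fun lam hre heq => ?_⟩
  set t := lam.im with ht
  have hl : lam = (t : ℂ) * Complex.I := by
    apply Complex.ext <;> simp [hre, ht]
  rw [hl] at heq
  have hreal : ((-t ^ 2) ^ 2 + (β₁ + β₂ + 4) * (-t ^ 2) + β₁ * β₂ : ℝ) = 0 := by
    have : (((-t ^ 2) ^ 2 + (β₁ + β₂ + 4) * (-t ^ 2) + β₁ * β₂ : ℝ) : ℂ) = 0 := by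
      push_cast
      rw [← heq]
      ring_nf
      simp [Complex.I_sq]
      ring
    exact_mod_cast this
  exact part1 (-t ^ 2) (by nlinarith [sq_nonneg t]) hreal
end

section
/- Consider the planar system ẍ + 2ẏ − x − x³ − xy² = 0, ÿ − 2ẋ − y − y³ − x²y = 0 on ℝ². Every nonconstant solution (x(t), y(t)) satisfies d²/dt²((x²+y²)/2) = (ẋ+y)² + (ẏ−x)² + (x²+y²)² > 0 whenever (x,y) ≠ (0,0); consequently the only periodic solution is the equilibrium (0,0). -/
/-!
`E := (x² + y²)/2` is convex along every solution: differentiating twice and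
substituting the equations of motion gives `E'' = (ẋ + y)² + (ẏ - x)² + (x² + y²)² ≥ 0`.
If the solution is `T`-periodic, so is `E'`; a monotone periodic function is constant,
hence `E'' ≡ 0`, which forces `x² + y² ≡ 0`.
-/

open Function

theorem Monotone.eq_of_periodic {α : Type*} [PartialOrder α] {g : ℝ → α} {T : ℝ}
    (hg : Monotone g) (hp : Periodic g T) (hT : 0 < T) (s t : ℝ) : g s = g t := by
  have le_all : ∀ a b, g a ≤ g b := fun a b => by
    obtain ⟨n, hn⟩ := exists_nat_ge ((a - b) / T)
    calc g a ≤ g (b + n * T) := hg (by linarith [(div_le_iff₀ hT).mp hn])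
      _ = g b := hp.nat_mul n b
  exact (le_all s t).antisymm (le_all t s)

theorem Function.Periodic.deriv {f : ℝ → ℝ} {T : ℝ} (h : Periodic f T) :
    Periodic (deriv f) T := fun t => by
  rw [← deriv_comp_add_const, h.funext]

theorem deriv_deriv_eq_zero_of_periodic {f : ℝ → ℝ} {T : ℝ} (hp : Periodic f T) (hT : 0 < T)
    (hf' : Differentiable ℝ (deriv f)) (hf'' : ∀ t, 0 ≤ deriv (deriv f) t) (t : ℝ) :
    deriv (deriv f) t = 0 := by
  have hconst : deriv f = fun _ => deriv f t :=
    funext fun s => (monotone_of_deriv_nonneg hf' hf'').eq_of_periodic hp.deriv hT s t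
  rw [hconst, deriv_const]

theorem hasDerivAt_deriv_half_sq_add_sq {x y : ℝ → ℝ} (hx : Differentiable ℝ x)
    (hy : Differentiable ℝ y) (hx' : Differentiable ℝ (deriv x))
    (hy' : Differentiable ℝ (deriv y)) (t : ℝ) :
    HasDerivAt (deriv fun s => (x s ^ 2 + y s ^ 2) / 2)
      (deriv x t ^ 2 + x t * deriv (deriv x) t + deriv y t ^ 2 + y t * deriv (deriv y) t) t := by
  have hderiv : (deriv fun s => (x s ^ 2 + y s ^ 2) / 2) =
      fun s => x s * deriv x s + y s * deriv y s := funext fun s =>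
    ((((hx s).hasDerivAt.pow 2).add ((hy s).hasDerivAt.pow 2)).div_const 2).deriv.trans (by ring)
  rw [hderiv]
  exact (((hx t).hasDerivAt.mul (hx' t).hasDerivAt).add
    ((hy t).hasDerivAt.mul (hy' t).hasDerivAt)).congr_deriv (by ring)

theorem sq_add_sq_add_sq_sq_pos (a b : ℝ) {x y : ℝ} (h : (x, y) ≠ (0, 0)) :
    0 < a ^ 2 + b ^ 2 + (x ^ 2 + y ^ 2) ^ 2 := by
  have hxy : x ≠ 0 ∨ y ≠ 0 := by
    contrapose! h
    rw [h.1, h.2]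
  have : 0 < x ^ 2 + y ^ 2 := by rcases hxy with hxy | hxy <;> positivity
  positivity

/-- For the planar system `ẍ + 2ẏ - x - x³ - xy² = 0`, `ÿ - 2ẋ - y - y³ - x²y = 0`:
along any solution, `d²/dt²((x²+y²)/2) = (ẋ+y)² + (ẏ-x)² + (x²+y²)²`, which is strictly
positive wherever `(x,y) ≠ (0,0)`; consequently the only periodic solution is the
equilibrium `(0,0)`. -/
theorem no_nontrivial_periodic_solution
    (x y : ℝ → ℝ) (hx : ContDiff ℝ 2 x) (hy : ContDiff ℝ 2 y)
    (heqx : ∀ t, deriv (deriv x) t + 2 * deriv y t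
        - x t - (x t) ^ 3 - x t * (y t) ^ 2 = 0)
    (heqy : ∀ t, deriv (deriv y) t - 2 * deriv x t
        - y t - (y t) ^ 3 - (x t) ^ 2 * y t = 0) :
    (∀ t : ℝ,
        deriv (deriv (fun s => ((x s) ^ 2 + (y s) ^ 2) / 2)) t
          = (deriv x t + y t) ^ 2 + (deriv y t - x t) ^ 2
              + ((x t) ^ 2 + (y t) ^ 2) ^ 2
        ∧ ((x t, y t) ≠ (0, 0) →
            0 < (deriv x t + y t) ^ 2 + (deriv y t - x t) ^ 2
                + ((x t) ^ 2 + (y t) ^ 2) ^ 2))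
      ∧ (∀ T : ℝ, 0 < T → (∀ t, x (t + T) = x t ∧ y (t + T) = y t) →
          ∀ t, x t = 0 ∧ y t = 0) := by
  have hE'' : ∀ t, HasDerivAt (deriv fun s => ((x s) ^ 2 + (y s) ^ 2) / 2)
      ((deriv x t + y t) ^ 2 + (deriv y t - x t) ^ 2 + ((x t) ^ 2 + (y t) ^ 2) ^ 2) t :=
    fun t => (hasDerivAt_deriv_half_sq_add_sq (hx.differentiable two_ne_zero)
      (hy.differentiable two_ne_zero) hx.differentiable_deriv_two hy.differentiable_deriv_two
      t).congr_deriv (by linear_combination x t * heqx t + y t * heqy t)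
  refine ⟨fun t => ⟨(hE'' t).deriv, sq_add_sq_add_sq_sq_pos _ _⟩, fun T hT hper t => ?_⟩
  have hzero := deriv_deriv_eq_zero_of_periodic (T := T)
    (fun s => by simp only [(hper s).1, (hper s).2]) hT
    (fun s => (hE'' s).differentiableAt) (fun s => by rw [(hE'' s).deriv]; positivity) t
  rw [(hE'' t).deriv] at hzero
  by_contra hne
  exact (sq_add_sq_add_sq_sq_pos _ _ (by simpa [Prod.ext_iff] using hne)).ne' hzero
end
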